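/- Let G be a bridgeless cubic graph. If there exist two disjoint matchings E0 and E2 of G such that E0 ∪ E2 induces an even subgraph and, for each i ∈ {0,2}, the cubic graph obtained from G − Ei by suppressing all degree-2 vertices is 3-edge-colorable, then G has six perfect matchings covering every edge exactly twice (a Fulkerson cover); and conversely, if G has a Fulkerson cover then such matchings E0, E2 exist. -/

import Mathlib

/-!
Evenness of `E₀ ∪ E₂` means that `E₀` and `E₂` cover the same vertices, so an edge of
`\overline{G ∖ E₀}` is a path of `G - E₀` alternating between edges of `E₂` and edges off
`E₀ ∪ E₂`. Lifting the three colour classes of `\overline{G ∖ E₀}` gives three perfect matchings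
that miss `E₀` and cover every edge of `E₂` twice and every other edge once; together with the
three lifts for `E₂` they form a Fulkerson cover.

Conversely, split a Fulkerson cover into two triples and let `E₀`, `E₂` be the edges missed by
the first, resp. the second triple. An edge of `G - E₀` lies in one or two matchings of the first
triple and is coloured by that index, resp. by the remaining one.
-/

open SimpleGraph Finset
open scoped Classical

/-- `M` is (the edge set of) a perfect matching of `G`: a set of edges of `G`
covering every vertex exactly once. -/
def IsPerfectMatchingSet {V : Type*} (G : SimpleGraph V) (M : Set (Sym2 V)) : Prop :=
  M ⊆ G.edgeSet ∧ ∀ v : V, ∃! e, e ∈ M ∧ v ∈ e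

/-- A matching of `G`: a set of edges of `G` such that every vertex is incident
with at most one of them. -/
def IsMatchingSet {V : Type*} (G : SimpleGraph V) (E : Set (Sym2 V)) : Prop :=
  E ⊆ G.edgeSet ∧ ∀ v : V, {e ∈ E | v ∈ e}.ncard ≤ 1

/-- The cubic graph `\overline{G ∖ E}` obtained from `G − E` by suppressing all
degree-2 vertices is 3-edge-colorable.  This is encoded on `G − E` itself: there
is a 3-coloring of the remaining edges which is proper at every vertex of degree
3 and constant at every vertex of degree 2 (such colorings correspond exactly to
proper 3-edge-colorings of the suppressed cubic graph). -/
def SuppressionColorable {V : Type*} (G : SimpleGraph V) (E : Set (Sym2 V)) : Prop :=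
  ∃ f : Sym2 V → Fin 3, ∀ v : V,
    ({e ∈ G.edgeSet \ E | v ∈ e}.ncard = 3 →
      ∀ e₁ ∈ G.edgeSet \ E, ∀ e₂ ∈ G.edgeSet \ E,
        v ∈ e₁ → v ∈ e₂ → e₁ ≠ e₂ → f e₁ ≠ f e₂) ∧
    ({e ∈ G.edgeSet \ E | v ∈ e}.ncard = 2 →
      ∀ e₁ ∈ G.edgeSet \ E, ∀ e₂ ∈ G.edgeSet \ E,
        v ∈ e₁ → v ∈ e₂ → f e₁ = f e₂)

lemma card_filter_mem_append {α : Type*} {m n : ℕ} (A : Fin m → Set α) (B : Fin n → Set α)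
    (e : α) : #{i | e ∈ Fin.append A B i} = #{i | e ∈ A i} + #{i | e ∈ B i} := by
  simp only [Finset.card_filter, Fin.sum_univ_add, Fin.append_left, Fin.append_right]

lemma exists_fin_six_double_cover_iff {α : Type*} (P : Set α → Prop) (S : Set α) :
    (∃ M : Fin 6 → Set α, (∀ i, P (M i)) ∧ ∀ e ∈ S, #{i | e ∈ M i} = 2) ↔
      ∃ A B : Fin 3 → Set α, (∀ i, P (A i)) ∧ (∀ i, P (B i)) ∧
        ∀ e ∈ S, #{i | e ∈ A i} + #{i | e ∈ B i} = 2 := by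
  constructor
  · rintro ⟨M, hM, hcount⟩
    refine ⟨fun i ↦ M (Fin.castAdd 3 i), fun i ↦ M (Fin.natAdd 3 i), fun i ↦ hM _,
      fun i ↦ hM _, fun e he ↦ ?_⟩
    rw [← card_filter_mem_append, Fin.append_castAdd_natAdd]
    exact hcount e he
  · rintro ⟨A, B, hA, hB, hcount⟩
    refine ⟨Fin.append A B, Fin.addCases (motive := fun i ↦ P (Fin.append A B i))
      (fun i ↦ ?_) (fun i ↦ ?_), fun e he ↦ ?_⟩
    · rw [Fin.append_left]; exact hA i
    · rw [Fin.append_right]; exact hB i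
    · exact (card_filter_mem_append A B e).trans (hcount e he)

def IsSuppressionColoring {V : Type*} (G : SimpleGraph V) (E : Set (Sym2 V))
    (f : Sym2 V → Fin 3) : Prop :=
  ∀ v : V,
    ({e ∈ G.edgeSet \ E | v ∈ e}.ncard = 3 →
      ∀ e₁ ∈ G.edgeSet \ E, ∀ e₂ ∈ G.edgeSet \ E,
        v ∈ e₁ → v ∈ e₂ → e₁ ≠ e₂ → f e₁ ≠ f e₂) ∧
    ({e ∈ G.edgeSet \ E | v ∈ e}.ncard = 2 →
      ∀ e₁ ∈ G.edgeSet \ E, ∀ e₂ ∈ G.edgeSet \ E,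
        v ∈ e₁ → v ∈ e₂ → f e₁ = f e₂)

section

variable {V : Type*} {G : SimpleGraph V}

lemma ncard_incidenceSet_of_cubic (hcubic : ∀ v : V, (G.neighborSet v).ncard = 3) (v : V) :
    (G.incidenceSet v).ncard = 3 := by
  rw [Set.ncard_congr' (G.incidenceSetEquivNeighborSet v), hcubic]

lemma finite_incidenceSet_of_cubic (hcubic : ∀ v : V, (G.neighborSet v).ncard = 3) (v : V) :
    (G.incidenceSet v).Finite :=
  Set.finite_of_ncard_ne_zero (by rw [ncard_incidenceSet_of_cubic hcubic]; decide)

lemma IsMatchingSet.eq_of_mem {E : Set (Sym2 V)} (hE : IsMatchingSet G E) {v : V}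
    (hfin : (G.incidenceSet v).Finite) {e e' : Sym2 V} (he : e ∈ E) (he' : e' ∈ E)
    (hv : v ∈ e) (hv' : v ∈ e') : e = e' :=
  (Set.ncard_le_one_iff (hfin.subset fun _ h ↦ ⟨hE.1 h.1, h.2⟩)).1 (hE.2 v) ⟨he, hv⟩ ⟨he', hv'⟩

lemma isMatchingSet_of_eq_of_mem {E : Set (Sym2 V)} (hsub : E ⊆ G.edgeSet)
    (heq : ∀ v e e', e ∈ E → e' ∈ E → v ∈ e → v ∈ e' → e = e') : IsMatchingSet G E := by
  refine ⟨hsub, fun v ↦ ?_⟩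
  have hsing : {e ∈ E | v ∈ e}.Subsingleton := fun e he e' he' ↦ heq v e e' he.1 he'.1 he.2 he'.2
  exact (Set.ncard_le_one_iff hsing.finite).2 fun he he' ↦ hsing he he'

lemma IsPerfectMatchingSet.eq_of_mem {M : Set (Sym2 V)} (hM : IsPerfectMatchingSet G M)
    {v : V} {e e' : Sym2 V} (he : e ∈ M) (he' : e' ∈ M) (hv : v ∈ e) (hv' : v ∈ e') :
    e = e' :=
  (hM.2 v).unique ⟨he, hv⟩ ⟨he', hv'⟩

lemma IsMatchingSet.ncard_incident_eq {E : Set (Sym2 V)} (hE : IsMatchingSet G E) {v : V}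
    (hfin : (G.incidenceSet v).Finite) :
    {e ∈ E | v ∈ e}.ncard = if ∃ e ∈ E, v ∈ e then 1 else 0 := by
  split_ifs with h
  · obtain ⟨e, he, hv⟩ := h
    have hset : {e ∈ E | v ∈ e} = {e} := Set.eq_singleton_iff_unique_mem.2
      ⟨⟨he, hv⟩, fun e' he' ↦ hE.eq_of_mem hfin he'.1 he he'.2 hv⟩
    rw [hset, Set.ncard_singleton]
  · have hset : {e ∈ E | v ∈ e} = ∅ := Set.eq_empty_of_forall_notMem fun e he ↦ h ⟨e, he⟩
    rw [hset, Set.ncard_empty]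

lemma even_ncard_union_iff {E₀ E₂ : Set (Sym2 V)} (hE₀ : IsMatchingSet G E₀)
    (hE₂ : IsMatchingSet G E₂) (hd : Disjoint E₀ E₂) {v : V} (hfin : (G.incidenceSet v).Finite) :
    Even {e ∈ E₀ ∪ E₂ | v ∈ e}.ncard ↔ ((∃ e ∈ E₀, v ∈ e) ↔ ∃ e ∈ E₂, v ∈ e) := by
  have hunion : {e ∈ E₀ ∪ E₂ | v ∈ e} = {e ∈ E₀ | v ∈ e} ∪ {e ∈ E₂ | v ∈ e} := by
    ext; simp [or_and_right]
  rw [hunion, Set.ncard_union_eq (hd.mono (fun _ h ↦ h.1) (fun _ h ↦ h.1))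
      (hfin.subset fun _ h ↦ ⟨hE₀.1 h.1, h.2⟩) (hfin.subset fun _ h ↦ ⟨hE₂.1 h.1, h.2⟩),
    hE₀.ncard_incident_eq hfin, hE₂.ncard_incident_eq hfin]
  split_ifs with h₀ h₂ h₂ <;> simp [h₀, h₂]

lemma IsMatchingSet.incident_sdiff_eq_of_mem {E : Set (Sym2 V)} (hE : IsMatchingSet G E) {v : V}
    (hfin : (G.incidenceSet v).Finite) {e₀ : Sym2 V} (he₀ : e₀ ∈ E) (hv : v ∈ e₀) :
    {e ∈ G.edgeSet \ E | v ∈ e} = G.incidenceSet v \ {e₀} := by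
  ext e
  refine ⟨fun ⟨⟨he, heE⟩, hve⟩ ↦ ⟨⟨he, hve⟩, fun h ↦ heE (h ▸ he₀)⟩,
    fun ⟨⟨he, hve⟩, hne⟩ ↦ ⟨⟨he, fun heE ↦ hne (hE.eq_of_mem hfin heE he₀ hve hv)⟩, hve⟩⟩

lemma incident_sdiff_eq_of_not_covered {E : Set (Sym2 V)} {v : V} (hv : ¬ ∃ e ∈ E, v ∈ e) :
    {e ∈ G.edgeSet \ E | v ∈ e} = G.incidenceSet v := by
  ext e
  exact ⟨fun ⟨⟨he, _⟩, hve⟩ ↦ ⟨he, hve⟩, fun ⟨he, hve⟩ ↦ ⟨⟨he, fun heE ↦ hv ⟨e, heE, hve⟩⟩, hve⟩⟩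

/-- The colour class `i` of `\overline{G ∖ Ea}` lifted to `G`: the edges off `Eb` of the paths
of `G - Ea` suppressed to edges of colour `i`, and the edges in `Eb` of all other paths. -/
def liftColorClass (G : SimpleGraph V) (Ea Eb : Set (Sym2 V)) (f : Sym2 V → Fin 3)
    (i : Fin 3) : Set (Sym2 V) :=
  {e ∈ G.edgeSet \ (Ea ∪ Eb) | f e = i} ∪ {e ∈ Eb | f e ≠ i}

lemma mem_liftColorClass_iff {Ea Eb : Set (Sym2 V)} (hEb : Eb ⊆ G.edgeSet) (hd : Disjoint Ea Eb)
    {f : Sym2 V → Fin 3} {i : Fin 3} {e : Sym2 V} :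
    e ∈ liftColorClass G Ea Eb f i ↔ e ∈ G.edgeSet \ Ea ∧ (e ∈ Eb ↔ f e ≠ i) := by
  by_cases he : e ∈ Eb
  · simp [liftColorClass, he, hEb he, hd.notMem_of_mem_right he]
  · simp [liftColorClass, he]

lemma card_filter_mem_liftColorClass (Ea Eb : Set (Sym2 V)) (f : Sym2 V → Fin 3)
    {e : Sym2 V} (he : e ∈ G.edgeSet) :
    #{i | e ∈ liftColorClass G Ea Eb f i} = if e ∈ Eb then 2 else if e ∈ Ea then 0 else 1 := by
  split_ifs with hb ha
  · simp [liftColorClass, hb, Finset.filter_ne]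
  · simp [liftColorClass, hb, ha]
  · simp [liftColorClass, hb, ha, he, Finset.filter_eq]

lemma existsUnique_of_injOn_of_ncard_eq {α β : Type*} [Fintype β] {S : Set α}
    (hS : S.ncard = Fintype.card β) {f : α → β} (hinj : Set.InjOn f S) (b : β) :
    ∃! a, a ∈ S ∧ f a = b := by
  have himage : f '' S = Set.univ := by
    refine Set.eq_of_subset_of_ncard_le (Set.subset_univ _) ?_ (Set.toFinite _)
    rw [hinj.ncard_image, hS, Set.ncard_univ, Nat.card_eq_fintype_card]
  obtain ⟨a, ha, rfl⟩ := himage.symm ▸ Set.mem_univ b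
  exact ⟨a, ⟨ha, rfl⟩, fun a' ha' ↦ hinj ha'.1 ha ha'.2⟩

lemma existsUnique_mem_pair_iff_ne {α β : Type*} {P : α → Prop} {f : α → β} {a b : α}
    (ha : P a) (hb : ¬ P b) (hf : f a = f b) (i : β) :
    ∃! e, e ∈ ({a, b} : Set α) ∧ (P e ↔ f e ≠ i) := by
  by_cases hbi : f b = i
  · refine ⟨b, ⟨by simp, by simp [hb, hbi]⟩, ?_⟩
    rintro e ⟨rfl | rfl, he⟩
    · exact absurd (hf.trans hbi) (he.1 ha)
    · rfl
  · refine ⟨a, ⟨by simp, by simp [ha, hf, hbi]⟩, ?_⟩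
    rintro e ⟨rfl | rfl, he⟩
    · rfl
    · exact absurd (he.2 hbi) hb

lemma isPerfectMatchingSet_liftColorClass (hcubic : ∀ v : V, (G.neighborSet v).ncard = 3)
    {Ea Eb : Set (Sym2 V)} (hEa : IsMatchingSet G Ea) (hEb : IsMatchingSet G Eb)
    (hd : Disjoint Ea Eb) (hcov : ∀ v, (∃ e ∈ Ea, v ∈ e) ↔ ∃ e ∈ Eb, v ∈ e)
    {f : Sym2 V → Fin 3} (hf : IsSuppressionColoring G Ea f) (i : Fin 3) :
    IsPerfectMatchingSet G (liftColorClass G Ea Eb f i) := by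
  refine ⟨fun e he ↦ ((mem_liftColorClass_iff hEb.1 hd).1 he).1.1, fun v ↦ ?_⟩
  have hfin := finite_incidenceSet_of_cubic hcubic v
  set S := {e ∈ G.edgeSet \ Ea | v ∈ e}
  have hmem e : (e ∈ liftColorClass G Ea Eb f i ∧ v ∈ e) ↔ e ∈ S ∧ (e ∈ Eb ↔ f e ≠ i) := by
    rw [mem_liftColorClass_iff hEb.1 hd]
    exact ⟨fun h ↦ ⟨⟨h.1.1, h.2⟩, h.1.2⟩, fun h ↦ ⟨⟨h.1.1, h.2⟩, h.1.2⟩⟩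
  simp_rw [hmem]
  by_cases hv : ∃ e ∈ Ea, v ∈ e
  · obtain ⟨ea, hea, hva⟩ := hv
    obtain ⟨eb, heb, hvb⟩ := (hcov v).1 ⟨ea, hea, hva⟩
    have hS : S.ncard = 2 := by
      rw [show S = _ from hEa.incident_sdiff_eq_of_mem hfin hea hva,
        Set.ncard_sdiff_singleton_of_mem (show ea ∈ G.incidenceSet v from ⟨hEa.1 hea, hva⟩),
        ncard_incidenceSet_of_cubic hcubic]
    have hebS : eb ∈ S := ⟨⟨hEb.1 heb, hd.notMem_of_mem_right heb⟩, hvb⟩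
    obtain ⟨t, htS, hteb⟩ := Set.exists_ne_of_one_lt_ncard (hS ▸ one_lt_two) eb
    have htEb : t ∉ Eb := fun ht ↦ hteb (hEb.eq_of_mem hfin ht heb htS.2 hvb)
    have hSeq : S = {eb, t} := (Set.eq_of_subset_of_ncard_le
      (by rintro e (rfl | rfl) <;> assumption) (by rw [hS, Set.ncard_pair hteb.symm])
      (hfin.subset fun _ h ↦ ⟨h.1.1, h.2⟩)).symm
    have hft : f eb = f t := (hf v).2 hS eb hebS.1 t htS.1 hvb htS.2
    rw [hSeq]
    exact existsUnique_mem_pair_iff_ne heb htEb hft i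
  · have hvb : ¬ ∃ e ∈ Eb, v ∈ e := (hcov v).not.1 hv
    have hS : S.ncard = 3 := by
      rw [show S = _ from incident_sdiff_eq_of_not_covered hv, ncard_incidenceSet_of_cubic hcubic]
    have hnotEb : ∀ e ∈ S, e ∉ Eb := fun e he heb ↦ hvb ⟨e, heb, he.2⟩
    have hinj : Set.InjOn f S := fun e₁ he₁ e₂ he₂ ↦
      not_imp_not.1 ((hf v).1 hS e₁ he₁.1 e₂ he₂.1 he₁.2 he₂.2)
    refine (existsUnique_congr fun e ↦ and_congr_right fun he ↦ ?_).1
      (existsUnique_of_injOn_of_ncard_eq hS hinj i)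
    simp [hnotEb e he]

lemma exists_fulkerson_of_suppressionColorable (hcubic : ∀ v : V, (G.neighborSet v).ncard = 3)
    {E₀ E₂ : Set (Sym2 V)} (hE₀ : IsMatchingSet G E₀) (hE₂ : IsMatchingSet G E₂)
    (hd : Disjoint E₀ E₂) (heven : ∀ v : V, Even {e ∈ E₀ ∪ E₂ | v ∈ e}.ncard)
    (hS₀ : SuppressionColorable G E₀) (hS₂ : SuppressionColorable G E₂) :
    ∃ A B : Fin 3 → Set (Sym2 V), (∀ i, IsPerfectMatchingSet G (A i)) ∧
      (∀ i, IsPerfectMatchingSet G (B i)) ∧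
        ∀ e ∈ G.edgeSet, #{i | e ∈ A i} + #{i | e ∈ B i} = 2 := by
  obtain ⟨f₀, hf₀⟩ := hS₀
  obtain ⟨f₂, hf₂⟩ := hS₂
  have hcov v : (∃ e ∈ E₀, v ∈ e) ↔ ∃ e ∈ E₂, v ∈ e :=
    (even_ncard_union_iff hE₀ hE₂ hd (finite_incidenceSet_of_cubic hcubic v)).1 (heven v)
  refine ⟨liftColorClass G E₀ E₂ f₀, liftColorClass G E₂ E₀ f₂,
    isPerfectMatchingSet_liftColorClass hcubic hE₀ hE₂ hd hcov hf₀,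
    isPerfectMatchingSet_liftColorClass hcubic hE₂ hE₀ hd.symm (fun v ↦ (hcov v).symm) hf₂,
    fun e he ↦ ?_⟩
  rw [card_filter_mem_liftColorClass _ _ _ he, card_filter_mem_liftColorClass _ _ _ he]
  have := hd.notMem_of_mem_left (a := e)
  split_ifs <;> simp_all

end

open Fin.CommRing in
/-- The colour of an edge lying in exactly the matchings `A i`, `i ∈ s`, of a triple `A`:
`κ {a} = a` and `κ sᶜ = κ s`, because `-1 = 2` in `Fin 3`. -/
def colorOfIndices (s : Finset (Fin 3)) : Fin 3 := (s.card : Fin 3) * ∑ i ∈ s, i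

open Fin.CommRing in
lemma colorOfIndices_singleton (a : Fin 3) : colorOfIndices {a} = a := by
  simp [colorOfIndices]

open Fin.CommRing in
lemma colorOfIndices_compl (s : Finset (Fin 3)) : colorOfIndices sᶜ = colorOfIndices s := by
  have hcard : ((sᶜ.card : ℕ) : Fin 3) + s.card = 0 := by
    rw [← Nat.cast_add, Finset.card_compl_add_card]
    rfl
  have hsum : ∑ i ∈ sᶜ, i + ∑ i ∈ s, i = 0 := by
    rw [Finset.sum_compl_add_sum]
    rfl
  unfold colorOfIndices
  linear_combination (∑ i ∈ sᶜ, i) * hcard - (s.card : Fin 3) * hsum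

section

variable {V ι : Type*} [Fintype ι] {G : SimpleGraph V}

def missedEdges (G : SimpleGraph V) (A : ι → Set (Sym2 V)) : Set (Sym2 V) :=
  {e ∈ G.edgeSet | ∀ i, e ∉ A i}

lemma card_filter_mem_eq_zero_iff {A : ι → Set (Sym2 V)} {e : Sym2 V} :
    #{i | e ∈ A i} = 0 ↔ ∀ i, e ∉ A i := by
  simp

lemma disjoint_filter_mem_of_isPerfectMatchingSet {A : ι → Set (Sym2 V)}
    (hA : ∀ i, IsPerfectMatchingSet G (A i)) {v : V} {e e' : Sym2 V} (hv : v ∈ e)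
    (hv' : v ∈ e') (hne : e ≠ e') : Disjoint (α := Finset ι) {i | e ∈ A i} {i | e' ∈ A i} :=
  Finset.disjoint_filter.2 fun i _ he he' ↦ hne ((hA i).eq_of_mem he he' hv hv')

end

section

variable {V : Type*} {G : SimpleGraph V} {A B : Fin 3 → Set (Sym2 V)}

lemma isMatchingSet_missedEdges (hB : ∀ i, IsPerfectMatchingSet G (B i))
    (hAB : ∀ e ∈ G.edgeSet, #{i | e ∈ A i} + #{i | e ∈ B i} = 2) :
    IsMatchingSet G (missedEdges G A) := by
  refine isMatchingSet_of_eq_of_mem (fun e he ↦ he.1) fun v e e' he he' hv hv' ↦ ?_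
  by_contra hne
  have hcardB : ∀ e ∈ missedEdges G A, #{i | e ∈ B i} = 2 := fun e he ↦ by
    simpa [card_filter_mem_eq_zero_iff.2 he.2] using hAB e he.1
  have := Finset.card_le_univ
    (({i | e ∈ B i} : Finset (Fin 3)) ∪ ({i | e' ∈ B i} : Finset (Fin 3)))
  rw [Finset.card_union_of_disjoint (disjoint_filter_mem_of_isPerfectMatchingSet hB hv hv' hne),
    hcardB e he, hcardB e' he', Fintype.card_fin] at this
  omega

/-- The three matchings `A i` meet a vertex `v` of a missed edge in only two edges, so one of
these lies in two of them and hence in none of the `B i`. -/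
lemma exists_mem_missedEdges_of_mem_missedEdges (hcubic : ∀ v : V, (G.neighborSet v).ncard = 3)
    (hA : ∀ i, IsPerfectMatchingSet G (A i))
    (hAB : ∀ e ∈ G.edgeSet, #{i | e ∈ A i} + #{i | e ∈ B i} = 2)
    {v : V} {e₀ : Sym2 V} (he₀ : e₀ ∈ missedEdges G A) (hv : v ∈ e₀) :
    ∃ w ∈ missedEdges G B, v ∈ w := by
  choose σ hσ using fun i ↦ ((hA i).2 v).exists
  have hmaps : ∀ i ∈ (Set.univ : Set (Fin 3)), σ i ∈ G.incidenceSet v \ {e₀} :=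
    fun i _ ↦ ⟨⟨(hA i).1 (hσ i).1, (hσ i).2⟩, fun h ↦ he₀.2 i (h ▸ (hσ i).1)⟩
  have hlt : (G.incidenceSet v \ {e₀}).ncard < (Set.univ : Set (Fin 3)).ncard := by
    rw [Set.ncard_sdiff_singleton_of_mem (show e₀ ∈ G.incidenceSet v from ⟨he₀.1, hv⟩),
      ncard_incidenceSet_of_cubic hcubic, Set.ncard_univ, Nat.card_eq_fintype_card,
      Fintype.card_fin]
    norm_num
  obtain ⟨i, -, j, -, hij, hσij⟩ := Set.exists_ne_map_eq_of_ncard_lt_of_maps_to hlt hmaps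
    (finite_incidenceSet_of_cubic hcubic v).sdiff
  have hw : σ i ∈ G.edgeSet := (hA i).1 (hσ i).1
  have htwo : 2 ≤ #{k | σ i ∈ A k} := by
    rw [← Finset.card_pair hij]
    refine Finset.card_le_card fun k hk ↦ ?_
    rcases Finset.mem_insert.1 hk with rfl | hk
    · simpa using (hσ k).1
    · simpa [Finset.mem_singleton.1 hk, hσij] using (hσ j).1
  refine ⟨σ i, ⟨hw, card_filter_mem_eq_zero_iff.1 ?_⟩, (hσ i).2⟩
  have := hAB _ hw
  omega

lemma isSuppressionColoring_missedEdges (hcubic : ∀ v : V, (G.neighborSet v).ncard = 3)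
    (hA : ∀ i, IsPerfectMatchingSet G (A i)) (hB : ∀ i, IsPerfectMatchingSet G (B i))
    (hAB : ∀ e ∈ G.edgeSet, #{i | e ∈ A i} + #{i | e ∈ B i} = 2) :
    IsSuppressionColoring G (missedEdges G A) fun e ↦ colorOfIndices {i | e ∈ A i} := by
  have hBA : ∀ e ∈ G.edgeSet, #{i | e ∈ B i} + #{i | e ∈ A i} = 2 :=
    fun e he ↦ (add_comm _ _).trans (hAB e he)
  intro v
  have hfin := finite_incidenceSet_of_cubic hcubic v
  constructor
  · intro h3 e₁ he₁ e₂ he₂ hv₁ hv₂ hne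
    have hv : ¬ ∃ z ∈ missedEdges G A, v ∈ z := by
      rintro ⟨z, hz, hvz⟩
      rw [(isMatchingSet_missedEdges hB hAB).incident_sdiff_eq_of_mem hfin hz hvz,
        Set.ncard_sdiff_singleton_of_mem (show z ∈ G.incidenceSet v from ⟨hz.1, hvz⟩),
        ncard_incidenceSet_of_cubic hcubic] at h3
      omega
    have hone : ∀ e ∈ G.edgeSet \ missedEdges G A, v ∈ e → #{i | e ∈ A i} = 1 := by
      rintro e ⟨he, hem⟩ hve
      have hne0 : #{i | e ∈ A i} ≠ 0 := fun h ↦ hem ⟨he, card_filter_mem_eq_zero_iff.1 h⟩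
      have hne2 : #{i | e ∈ B i} ≠ 0 := fun h ↦ hv
        (exists_mem_missedEdges_of_mem_missedEdges hcubic hB hBA
          ⟨he, card_filter_mem_eq_zero_iff.1 h⟩ hve)
      have := hAB e he
      omega
    obtain ⟨a, ha⟩ := Finset.card_eq_one.1 (hone e₁ he₁ hv₁)
    obtain ⟨b, hb⟩ := Finset.card_eq_one.1 (hone e₂ he₂ hv₂)
    have hdisj := disjoint_filter_mem_of_isPerfectMatchingSet hA hv₁ hv₂ hne
    rw [ha, hb, Finset.disjoint_singleton] at hdisj
    simpa only [ha, hb, colorOfIndices_singleton]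
  · intro h2 e₁ he₁ e₂ he₂ hv₁ hv₂
    rcases eq_or_ne e₁ e₂ with rfl | hne
    · rfl
    have hpair : {e ∈ G.edgeSet \ missedEdges G A | v ∈ e} = {e₁, e₂} :=
      (Set.eq_of_subset_of_ncard_le (by rintro e (rfl | rfl) <;> exact ⟨‹_›, ‹_›⟩)
        (by rw [h2, Set.ncard_pair hne]) (hfin.subset fun _ h ↦ ⟨h.1.1, h.2⟩)).symm
    have hcompl : ({i | e₂ ∈ A i} : Finset (Fin 3)) = ({i | e₁ ∈ A i} : Finset (Fin 3))ᶜ := by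
      refine (IsCompl.compl_eq ⟨disjoint_filter_mem_of_isPerfectMatchingSet hA hv₁ hv₂ hne,
        codisjoint_iff.2 (Finset.eq_univ_of_forall fun i ↦ ?_)⟩).symm
      obtain ⟨e, ⟨heA, hve⟩, -⟩ := (hA i).2 v
      have : e ∈ ({e₁, e₂} : Set (Sym2 V)) :=
        hpair ▸ ⟨⟨(hA i).1 heA, fun hm ↦ hm.2 i heA⟩, hve⟩
      rcases this with rfl | rfl <;> simp [heA]
    dsimp only
    rw [hcompl, colorOfIndices_compl]

lemma exists_matchings_of_fulkerson (hcubic : ∀ v : V, (G.neighborSet v).ncard = 3)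
    (hA : ∀ i, IsPerfectMatchingSet G (A i)) (hB : ∀ i, IsPerfectMatchingSet G (B i))
    (hAB : ∀ e ∈ G.edgeSet, #{i | e ∈ A i} + #{i | e ∈ B i} = 2) :
    ∃ E₀ E₂ : Set (Sym2 V), IsMatchingSet G E₀ ∧ IsMatchingSet G E₂ ∧
      Disjoint E₀ E₂ ∧ (∀ v : V, Even {e ∈ E₀ ∪ E₂ | v ∈ e}.ncard) ∧
      SuppressionColorable G E₀ ∧ SuppressionColorable G E₂ := by
  have hBA : ∀ e ∈ G.edgeSet, #{i | e ∈ B i} + #{i | e ∈ A i} = 2 :=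
    fun e he ↦ (add_comm _ _).trans (hAB e he)
  have hE₀ := isMatchingSet_missedEdges hB hAB
  have hE₂ := isMatchingSet_missedEdges hA hBA
  have hd : Disjoint (missedEdges G A) (missedEdges G B) := Set.disjoint_left.2 fun e he he' ↦ by
    have := hAB e he.1
    rw [card_filter_mem_eq_zero_iff.2 he.2, card_filter_mem_eq_zero_iff.2 he'.2] at this
    omega
  refine ⟨missedEdges G A, missedEdges G B, hE₀, hE₂, hd, fun v ↦ ?_,
    ⟨_, isSuppressionColoring_missedEdges hcubic hA hB hAB⟩,
    ⟨_, isSuppressionColoring_missedEdges hcubic hB hA hBA⟩⟩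
  refine (even_ncard_union_iff hE₀ hE₂ hd (finite_incidenceSet_of_cubic hcubic v)).2
    ⟨fun ⟨e, he, hv⟩ ↦ exists_mem_missedEdges_of_mem_missedEdges hcubic hA hAB he hv,
      fun ⟨e, he, hv⟩ ↦ exists_mem_missedEdges_of_mem_missedEdges hcubic hB hBA he hv⟩

end

theorem stmt11_general {V : Type*} (G : SimpleGraph V)
    (hcubic : ∀ v : V, (G.neighborSet v).ncard = 3) :
    (∃ E0 E2 : Set (Sym2 V), IsMatchingSet G E0 ∧ IsMatchingSet G E2 ∧
        Disjoint E0 E2 ∧ (∀ v : V, Even {e ∈ E0 ∪ E2 | v ∈ e}.ncard) ∧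
        SuppressionColorable G E0 ∧ SuppressionColorable G E2) ↔
      ∃ M : Fin 6 → Set (Sym2 V), (∀ i, IsPerfectMatchingSet G (M i)) ∧
        ∀ e ∈ G.edgeSet, (Finset.univ.filter (fun i : Fin 6 => e ∈ M i)).card = 2 := by
  rw [exists_fin_six_double_cover_iff]
  constructor
  · rintro ⟨E0, E2, hE0, hE2, hd, heven, hS0, hS2⟩
    exact exists_fulkerson_of_suppressionColorable hcubic hE0 hE2 hd heven hS0 hS2
  · rintro ⟨A, B, hA, hB, hAB⟩
    exact exists_matchings_of_fulkerson hcubic hA hB hAB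

/-- Hao–Niu–Wang–Zhang–Zhang: a bridgeless cubic graph `G` has a
Fulkerson cover iff there are two disjoint matchings `E0`, `E2` whose union
induces an even subgraph and such that `\overline{G ∖ E0}` and `\overline{G ∖ E2}`
are 3-edge-colorable. -/
theorem stmt11 {V : Type*} [Fintype V] (G : SimpleGraph V)
    (hbridgeless : ∀ e ∈ G.edgeSet, ¬ G.IsBridge e)
    (hcubic : ∀ v : V, (G.neighborSet v).ncard = 3) :
    (∃ E0 E2 : Set (Sym2 V), IsMatchingSet G E0 ∧ IsMatchingSet G E2 ∧
        Disjoint E0 E2 ∧ (∀ v : V, Even {e ∈ E0 ∪ E2 | v ∈ e}.ncard) ∧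
        SuppressionColorable G E0 ∧ SuppressionColorable G E2) ↔
      ∃ M : Fin 6 → Set (Sym2 V), (∀ i, IsPerfectMatchingSet G (M i)) ∧
        ∀ e ∈ G.edgeSet, (Finset.univ.filter (fun i : Fin 6 => e ∈ M i)).card = 2 :=
  stmt11_general G hcubic
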